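/- Let G be a finite graph, k ∈ ℕ, let N ⊆ S_k be a nested proper separation system of G, and let (T,𝒱) be a tree-decomposition of G such that the map assigning to each oriented edge of T the separation it induces is a bijection onto N. Then every k-profile P of G inhabits exactly one node of T: there is a unique node t of T with P ∩ N = O(t). -/

import Mathlib

/-! The profile `P` orients every edge `t₁t₂` of `T`, towards `t₂` if `P` contains the separation
induced by `(t₁, t₂)`. No node `b` has two outgoing edges `ba`, `bc`: the inverse of the
separation induced by `(b, c)` lies below the one induced by `(b, a)`, so `P` would not be
consistent. In a finite tree such an orientation has a sink `t` (the head of an arrow whose head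
side is smallest), and by induction on the size of the head side every edge points towards `t`,
which is the statement `P ∩ N = O(t)`. Any other node `t'` is left by the first edge of the path
from `t'` to `t`, so `t` is unique. -/

open SimpleGraph Set

namespace CanonicalTD

variable {V : Type*} {ι : Type*}

/-- `p = (A,B)` is a separation of `G`: `A ∪ B = V` and no edge between `A∖B` and `B∖A`. -/
def IsSep (G : SimpleGraph V) (p : Set V × Set V) : Prop :=
  p.1 ∪ p.2 = univ ∧ ∀ a ∈ p.1 \ p.2, ∀ b ∈ p.2 \ p.1, ¬G.Adj a b

/-- The order `|A ∩ B|` of a separation `(A,B)`. -/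
noncomputable def sepOrder (p : Set V × Set V) : ℕ := (p.1 ∩ p.2).ncard

/-- A separation is proper if both `A∖B` and `B∖A` are nonempty. -/
def ProperSep (p : Set V × Set V) : Prop := (p.1 \ p.2).Nonempty ∧ (p.2 \ p.1).Nonempty

/-- The partial order on separations: `(A,B) ≤ (C,D)` iff `A ⊆ C` and `D ⊆ B`. -/
def SepLE (p q : Set V × Set V) : Prop := p.1 ⊆ q.1 ∧ q.2 ⊆ p.2

/-- Two separations are nested if they become comparable after possibly inverting. -/
def Nested (p q : Set V × Set V) : Prop :=
  SepLE p q ∨ SepLE q p ∨ SepLE p q.swap ∨ SepLE q.swap p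

/-- A separation `(A,B)` is tight if every vertex of `A ∩ B` has a neighbour in `A∖B`
and a neighbour in `B∖A`. -/
def TightSep (G : SimpleGraph V) (p : Set V × Set V) : Prop :=
  ∀ v ∈ p.1 ∩ p.2, (∃ a ∈ p.1 \ p.2, G.Adj v a) ∧ ∃ b ∈ p.2 \ p.1, G.Adj v b

/-- `S_k`: the set of all proper separations of `G` of order `< k`. -/
def Sk (G : SimpleGraph V) (k : ℕ) : Set (Set V × Set V) :=
  {p | IsSep G p ∧ ProperSep p ∧ sepOrder p < k}

/-- A separation system of `G`: a set of separations closed under inverses. -/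
def IsSepSystem (G : SimpleGraph V) (N : Set (Set V × Set V)) : Prop :=
  (∀ p ∈ N, IsSep G p) ∧ ∀ p ∈ N, p.swap ∈ N

def NestedSystem (N : Set (Set V × Set V)) : Prop :=
  ∀ p ∈ N, ∀ q ∈ N, Nested p q

def ProperSystem (N : Set (Set V × Set V)) : Prop := ∀ p ∈ N, ProperSep p

/-- An orientation of `N`: contains exactly one of `(A,B)`, `(B,A)` for each `(A,B) ∈ N`. -/
def IsOrientation (N O : Set (Set V × Set V)) : Prop :=
  O ⊆ N ∧ ∀ p ∈ N, (p ∈ O ↔ p.swap ∉ O)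

/-- Consistency: no distinct `(A,B),(C,D) ∈ O` with `(D,C) ≤ (A,B)`. -/
def Consistent (O : Set (Set V × Set V)) : Prop :=
  ∀ p ∈ O, ∀ q ∈ O, p ≠ q → ¬SepLE q.swap p

/-- A `k`-profile of `G`. -/
def IsProfile (G : SimpleGraph V) (k : ℕ) (P : Set (Set V × Set V)) : Prop :=
  IsOrientation (Sk G k) P ∧ Consistent P ∧
    ∀ p ∈ P, ∀ q ∈ P, (p.2 ∩ q.2, p.1 ∪ q.1) ∉ P

/-- `(T, Vt)` is a tree-decomposition of `G`. -/
def IsTreeDecomp (G : SimpleGraph V) (T : SimpleGraph ι) (Vt : ι → Set V) : Prop :=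
  T.IsTree ∧ (⋃ t, Vt t) = univ ∧
  (∀ u v, G.Adj u v → ∃ t, u ∈ Vt t ∧ v ∈ Vt t) ∧
  ∀ (t1 t3 : ι) (w : T.Walk t1 t3), w.IsPath →
    ∀ t2 ∈ w.support, Vt t1 ∩ Vt t3 ⊆ Vt t2

/-- The vertex set of the component of `T - t1t2` containing `t1`. -/
def side (T : SimpleGraph ι) (t1 t2 : ι) : Set ι :=
  {s | (T.deleteEdges {s(t1, t2)}).Reachable t1 s}

/-- The separation induced by the oriented edge `(t1, t2)` of `T`. -/
def inducedSep (T : SimpleGraph ι) (Vt : ι → Set V) (t1 t2 : ι) : Set V × Set V :=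
  (⋃ s ∈ side T t1 t2, Vt s, ⋃ s ∈ side T t2 t1, Vt s)

/-- The set of separations induced by oriented edges of `T`. -/
def inducedSeps (T : SimpleGraph ι) (Vt : ι → Set V) : Set (Set V × Set V) :=
  {p | ∃ t1 t2, T.Adj t1 t2 ∧ p = inducedSep T Vt t1 t2}

/-- `O(t)`: separations induced by oriented edges `(t1,t2)` with `t` in the component of `t2`. -/
def Otow (T : SimpleGraph ι) (Vt : ι → Set V) (t : ι) : Set (Set V × Set V) :=
  {p | ∃ t1 t2, T.Adj t1 t2 ∧ t ∈ side T t2 t1 ∧ p = inducedSep T Vt t1 t2}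

/-- The map assigning to each oriented edge of `T` its induced separation is a bijection
onto `N`. -/
def EdgeSepBij (T : SimpleGraph ι) (Vt : ι → Set V) (N : Set (Set V × Set V)) : Prop :=
  (∀ t1 t2, T.Adj t1 t2 → inducedSep T Vt t1 t2 ∈ N) ∧
  ∀ p ∈ N, ∃! e : ι × ι, T.Adj e.1 e.2 ∧ inducedSep T Vt e.1 e.2 = p

/-- The tree-decomposition has adhesion `< k`. -/
def AdhesionLt (T : SimpleGraph ι) (Vt : ι → Set V) (k : ℕ) : Prop :=
  ∀ t1 t2, T.Adj t1 t2 → (Vt t1 ∩ Vt t2).ncard < k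

/-- The tree-decomposition is canonical: the automorphism group of `G` acts on `T`
compatibly with the parts. -/
def Canonical (G : SimpleGraph V) (T : SimpleGraph ι) (Vt : ι → Set V) : Prop :=
  ∃ ρ : (G ≃g G) → (T ≃g T),
    (∀ φ ψ : G ≃g G, ρ (φ.trans ψ) = (ρ φ).trans (ρ ψ)) ∧
    ∀ (φ : G ≃g G) (t : ι), (⇑φ) '' Vt t = Vt (ρ φ t)

/-- `X` is `(<k)`-inseparable in `G`. -/
def Inseparable' (G : SimpleGraph V) (k : ℕ) (X : Set V) : Prop :=
  ∀ p : Set V × Set V, IsSep G p → sepOrder p < k → X ⊆ p.1 ∨ X ⊆ p.2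

/-- `X` is a `k`-block of `G`: a maximal `(<k)`-inseparable set of at least `k` vertices. -/
def IsBlock (G : SimpleGraph V) (k : ℕ) (X : Set V) : Prop :=
  k ≤ X.ncard ∧ Inseparable' G k X ∧
    ∀ Y, Inseparable' G k Y → X ⊆ Y → Y = X

/-- The `k`-profile `P_k(X)` induced by a `k`-block `X`. -/
def blockProfile (G : SimpleGraph V) (k : ℕ) (X : Set V) : Set (Set V × Set V) :=
  {p | p ∈ Sk G k ∧ X ⊆ p.2 ∧ ¬X ⊆ p.1}

/-- `p` is a `≤`-maximal element of `M`. -/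
def MaxIn (M : Set (Set V × Set V)) (p : Set V × Set V) : Prop :=
  p ∈ M ∧ ∀ q ∈ M, SepLE p q → q = p

/-- The `k`-block `X` is well separated in `S`: the maximal elements of `P_k(X) ∩ S`
are pairwise nested. -/
def WellSepIn (G : SimpleGraph V) (k : ℕ) (X : Set V) (S : Set (Set V × Set V)) : Prop :=
  ∀ p q, MaxIn (blockProfile G k X ∩ S) p → MaxIn (blockProfile G k X ∩ S) q → Nested p q

/-- `D` is the vertex set of a component of `G - X`. -/
def IsCompOf (G : SimpleGraph V) (X D : Set V) : Prop :=
  D ⊆ Xᶜ ∧ (G.induce D).Connected ∧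
    ∀ D', D ⊆ D' → D' ⊆ Xᶜ → (G.induce D').Connected → D' = D

/-- `S(X)`: the set of tight separations `(A,B)` with `X ⊆ B` and `A∖B` the vertex set of
a component of `G - X`. -/
def SX (G : SimpleGraph V) (X : Set V) : Set (Set V × Set V) :=
  {p | IsSep G p ∧ TightSep G p ∧ X ⊆ p.2 ∧ IsCompOf G X (p.1 \ p.2)}

/-- `G` is `m`-connected. -/
def IsKConnected (G : SimpleGraph V) [Fintype V] (m : ℕ) : Prop :=
  m < Fintype.card V ∧ ∀ U : Set V, U.ncard < m → (G.induce Uᶜ).Connected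

/-- The tree-decomposition distinguishes the set `Profs` of profiles. -/
def DistinguishesProfiles (T : SimpleGraph ι) (Vt : ι → Set V)
    (Profs : Set (Set (Set V × Set V))) : Prop :=
  ∀ P ∈ Profs, ∀ P' ∈ Profs, P ≠ P' → ∃ p ∈ inducedSeps T Vt, p ∈ P ∧ p.swap ∈ P'

/-- The tree-decomposition distinguishes every two distinct `k`-blocks efficiently. -/
def DistinguishesBlocksEff (G : SimpleGraph V) (k : ℕ) (T : SimpleGraph ι)
    (Vt : ι → Set V) : Prop :=
  ∀ X X', IsBlock G k X → IsBlock G k X' → X ≠ X' →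
    ∃ p ∈ inducedSeps T Vt, X ⊆ p.1 ∧ X' ⊆ p.2 ∧
      ∀ q : Set V × Set V, IsSep G q → X ⊆ q.1 → X' ⊆ q.2 → sepOrder p ≤ sepOrder q

theorem _root_.SimpleGraph.Walk.reachable_deleteEdges_of_notMem_support {G : SimpleGraph ι} {u v w : ι}
    (p : G.Walk u v) (hw : w ∉ p.support) {e : Sym2 ι} (he : w ∈ e) :
    (G.deleteEdges {e}).Reachable u v :=
  ⟨p.toDeleteEdge e fun hep => hw (Walk.mem_support_of_mem_edges hep he)⟩

section Side

variable {T : SimpleGraph ι} {a b c : ι}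

theorem mem_side_self (T : SimpleGraph ι) (a b : ι) : a ∈ side T a b := Reachable.refl _

theorem side_swap_eq (T : SimpleGraph ι) (a b : ι) :
    side T b a = {s | (T.deleteEdges {s(a, b)}).Reachable b s} := by
  rw [side, Sym2.eq_swap]

theorem disjoint_side (hT : T.IsAcyclic) (hab : T.Adj a b) :
    Disjoint (side T a b) (side T b a) := by
  rw [side_swap_eq T a b, Set.disjoint_left]
  intro x hax hbx
  exact isAcyclic_iff_forall_adj_isBridge.mp hT hab (hax.trans hbx.symm)

theorem notMem_side (hT : T.IsAcyclic) (hab : T.Adj a b) : b ∉ side T a b :=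
  Set.disjoint_right.mp (disjoint_side hT hab) (mem_side_self T b a)

theorem mem_side_or_mem_side (hT : T.Preconnected) (hab : T.Adj a b) (x : ι) :
    x ∈ side T a b ∨ x ∈ side T b a := by
  classical
  obtain ⟨p, hp⟩ := (hT a x).some.toPath
  by_cases hpe : s(a, b) ∈ p.edges
  · right
    cases p with
    | nil => simp at hpe
    | @cons _ c _ hac q =>
      rw [Walk.cons_isPath_iff] at hp
      have hqe : s(a, b) ∉ q.edges := fun h => hp.2 (q.fst_mem_support_of_mem_edges h)
      obtain rfl : b = c := by simpa [hqe, hab.ne.symm] using hpe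
      exact q.reachable_deleteEdges_of_notMem_support hp.2 (Sym2.mem_mk_right _ _)
  · exact Or.inl ⟨p.toDeleteEdge _ hpe⟩

theorem exists_adj_mem_side_of_ne (hT : T.Preconnected) {t t' : ι} (h : t' ≠ t) :
    ∃ c, T.Adj t' c ∧ t ∈ side T c t' := by
  classical
  obtain ⟨p, hp⟩ := (hT t' t).some.toPath
  cases p with
  | nil => exact absurd rfl h
  | @cons _ c _ hc q =>
    rw [Walk.cons_isPath_iff] at hp
    exact ⟨c, hc, q.reachable_deleteEdges_of_notMem_support hp.2 (Sym2.mem_mk_right _ _)⟩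

theorem side_subset_side (hT : T.IsAcyclic) (hab : T.Adj a b) (hac : a ≠ c) :
    side T a b ⊆ side T b c := by
  classical
  rintro x ⟨p⟩
  have hb : b ∉ p.support := fun hb => notMem_side hT hab ⟨p.takeUntil b hb⟩
  have hba : (T.deleteEdges {s(b, c)}).Adj b a := by
    simp [hab.symm, hac, hab.ne]
  refine hba.reachable.trans ?_
  exact (p.mapLe (deleteEdges_le _)).reachable_deleteEdges_of_notMem_support
    (by rwa [Walk.support_mapLe_eq_support]) (Sym2.mem_mk_left _ _)

theorem side_ssubset_side (hT : T.IsAcyclic) (hab : T.Adj a b) (hac : a ≠ c) :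
    side T a b ⊂ side T b c :=
  ⟨side_subset_side hT hab hac, fun h => notMem_side hT hab (h (mem_side_self T b c))⟩

end Side

section EdgeOrientation

variable {T : SimpleGraph ι} {D : ι → ι → Prop}

/-- Reading `D a b` as "the edge `ab` is oriented from `a` to `b`", every edge points towards `t`. -/
def PointsToward (T : SimpleGraph ι) (D : ι → ι → Prop) (t : ι) : Prop :=
  ∀ a b, T.Adj a b → (D a b ↔ t ∈ side T b a)

theorem exists_sink [Finite ι] [Nonempty ι] (hT : T.IsAcyclic)
    (horient : ∀ a b, T.Adj a b → (D a b ↔ ¬D b a)) :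
    ∃ t, ∀ u, T.Adj t u → ¬D t u := by
  by_cases harc : ∃ e : ι × ι, T.Adj e.1 e.2 ∧ D e.1 e.2
  · obtain ⟨⟨a, b⟩, ⟨hab, hD⟩, hmin⟩ := Set.exists_min_image
      {e : ι × ι | T.Adj e.1 e.2 ∧ D e.1 e.2} (fun e => (side T e.2 e.1).ncard) (Set.toFinite _)
      harc
    refine ⟨b, fun c hbc hbD => ?_⟩
    have hca : c ≠ a := fun hca => (horient a b hab).mp hD (hca ▸ hbD)
    have hlt := Set.ncard_lt_ncard (side_ssubset_side hT hbc.symm hca) (Set.toFinite _)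
    exact (hmin (b, c) ⟨hbc, hbD⟩).not_gt hlt
  · push Not at harc
    exact ⟨Classical.arbitrary ι, fun u htu => harc (_, u) htu⟩

theorem rel_of_mem_side_of_sink [Finite ι] (hT : T.IsTree)
    (horient : ∀ a b, T.Adj a b → (D a b ↔ ¬D b a))
    (hout : ∀ a b c, T.Adj b a → T.Adj b c → D b a → D b c → a = c)
    {t : ι} (hsink : ∀ u, T.Adj t u → ¬D t u)
    {a b : ι} (hab : T.Adj a b) (ht : t ∈ side T b a) : D a b := by
  induction hn : (side T b a).ncard using Nat.strong_induction_on generalizing a b with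
  | _ n ih =>
  obtain rfl | hbt := eq_or_ne t b
  · exact (horient a _ hab).mpr (hsink a hab.symm)
  obtain ⟨c, hbc, htc⟩ := exists_adj_mem_side_of_ne hT.connected.preconnected hbt.symm
  have hca : c ≠ a := fun hca =>
    Set.disjoint_left.mp (disjoint_side hT.isAcyclic hab) (hca ▸ htc) ht
  have hlt := Set.ncard_lt_ncard (side_ssubset_side hT.isAcyclic hbc.symm hca)
    (Set.toFinite _)
  have hbD : D b c := ih _ (hn ▸ hlt) hbc htc rfl
  exact (horient a b hab).mpr fun hba => hca (hout a b c hab.symm hbc hba hbD).symm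

theorem existsUnique_pointsToward [Finite ι] (hT : T.IsTree)
    (horient : ∀ a b, T.Adj a b → (D a b ↔ ¬D b a))
    (hout : ∀ a b c, T.Adj b a → T.Adj b c → D b a → D b c → a = c) :
    ∃! t, PointsToward T D t := by
  have := hT.connected.nonempty
  obtain ⟨t, hsink⟩ := exists_sink hT.isAcyclic horient
  have htoward : PointsToward T D t := by
    refine fun a b hab => ⟨fun hD => ?_, rel_of_mem_side_of_sink hT horient hout hsink hab⟩
    refine (mem_side_or_mem_side hT.connected.preconnected hab t).resolve_left fun hta => ?_
    exact (horient a b hab).mp hD (rel_of_mem_side_of_sink hT horient hout hsink hab.symm hta)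
  refine ⟨t, htoward, fun t' ht' => ?_⟩
  by_contra hne
  obtain ⟨c, hc, htc⟩ := exists_adj_mem_side_of_ne hT.connected.preconnected hne
  exact notMem_side hT.isAcyclic hc.symm ((ht' t' c hc).mp ((htoward t' c hc).mpr htc))

end EdgeOrientation

section InducedSep

variable {T : SimpleGraph ι} {Vt : ι → Set V} {N : Set (Set V × Set V)} {a b c d : ι}

theorem inducedSep_le_inducedSep (hT : T.IsAcyclic) (hab : T.Adj a b) (hbc : T.Adj b c)
    (hac : a ≠ c) : SepLE (inducedSep T Vt a b) (inducedSep T Vt b c) :=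
  ⟨biUnion_mono (side_subset_side hT hab hac) fun _ _ => subset_rfl,
    biUnion_mono (side_subset_side hT hbc.symm hac.symm) fun _ _ => subset_rfl⟩

theorem EdgeSepBij.eq_of_inducedSep_eq (hbij : EdgeSepBij T Vt N) (hab : T.Adj a b)
    (hcd : T.Adj c d) (h : inducedSep T Vt a b = inducedSep T Vt c d) : a = c ∧ b = d := by
  obtain ⟨_, -, hu⟩ := hbij.2 _ (hbij.1 a b hab)
  exact Prod.ext_iff.mp ((hu (a, b) ⟨hab, rfl⟩).trans (hu (c, d) ⟨hcd, h.symm⟩).symm)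

theorem Consistent.eq_of_inducedSep_mem {P : Set (Set V × Set V)} (hP : Consistent P)
    (hT : T.IsAcyclic) (hbij : EdgeSepBij T Vt N) (hba : T.Adj b a) (hbc : T.Adj b c)
    (ha : inducedSep T Vt b a ∈ P) (hc : inducedSep T Vt b c ∈ P) : a = c := by
  by_contra hac
  exact hP _ ha _ hc (fun h => hac (hbij.eq_of_inducedSep_eq hba hbc h).2)
    (inducedSep_le_inducedSep hT hbc.symm hba (Ne.symm hac))

theorem inter_eq_Otow_iff (hbij : EdgeSepBij T Vt N) (P : Set (Set V × Set V)) (t : ι) :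
    P ∩ N = Otow T Vt t ↔ PointsToward T (fun a b => inducedSep T Vt a b ∈ P) t := by
  constructor
  · intro h a b hab
    constructor
    · intro hp
      obtain ⟨c, d, hcd, ht, hsep⟩ : inducedSep T Vt a b ∈ Otow T Vt t := by
        rw [← h]
        exact ⟨hp, hbij.1 a b hab⟩
      obtain ⟨rfl, rfl⟩ := hbij.eq_of_inducedSep_eq hab hcd hsep
      exact ht
    · intro ht
      have hmem : inducedSep T Vt a b ∈ P ∩ N := by
        rw [h]
        exact ⟨a, b, hab, ht, rfl⟩
      exact hmem.1
  · intro h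
    ext p
    constructor
    · rintro ⟨hpP, hpN⟩
      obtain ⟨⟨a, b⟩, ⟨hab, rfl⟩, -⟩ := hbij.2 p hpN
      exact ⟨a, b, hab, (h a b hab).mp hpP, rfl⟩
    · rintro ⟨a, b, hab, ht, rfl⟩
      exact ⟨(h a b hab).mpr ht, hbij.1 a b hab⟩

end InducedSep

theorem stmt_3_general {V : Type*} (G : SimpleGraph V) (k : ℕ)
    {ι : Type*} [Fintype ι] (T : SimpleGraph ι) (Vt : ι → Set V)
    (N : Set (Set V × Set V)) (hNk : N ⊆ Sk G k)
    (htd : IsTreeDecomp G T Vt) (hbij : EdgeSepBij T Vt N)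
    (P : Set (Set V × Set V)) (hP : IsProfile G k P) :
    ∃! t : ι, P ∩ N = Otow T Vt t := by
  have hT : T.IsTree := htd.1
  refine (existsUnique_congr fun t => inter_eq_Otow_iff hbij P t).mpr
    (existsUnique_pointsToward hT (fun a b hab => hP.1.2 _ (hNk (hbij.1 a b hab))) ?_)
  exact fun a b c hba hbc => hP.2.1.eq_of_inducedSep_mem hT.isAcyclic hbij hba hbc

/-- Every `k`-profile of `G` inhabits exactly one node of `T`. -/
theorem stmt_3 {V : Type*} [Fintype V] (G : SimpleGraph V) (k : ℕ)
    {ι : Type*} [Fintype ι] (T : SimpleGraph ι) (Vt : ι → Set V)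
    (N : Set (Set V × Set V)) (hNk : N ⊆ Sk G k)
    (hsys : IsSepSystem G N) (hnested : NestedSystem N) (hproper : ProperSystem N)
    (htd : IsTreeDecomp G T Vt) (hbij : EdgeSepBij T Vt N)
    (P : Set (Set V × Set V)) (hP : IsProfile G k P) :
    ∃! t : ι, P ∩ N = Otow T Vt t :=
  stmt_3_general G k T Vt N hNk htd hbij P hP

end CanonicalTD
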